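/- arXiv:0705.1023 — 5 statements merged into one kernel-verified Lean document; each statement's English description precedes it below -/
import Mathlib

section
/- Let H be a Hilbert space and F, G closed subspaces with orthogonal projectors P_F, P_G. Then there exists a unitary operator W on H such that P_F P_G P_F = W* (P_G P_F P_G) W. -/
/-!
Put `A = P + Q - 1`, `T = PQP` and `S = QPQ`. For idempotents `P`, `Q` one computes
`A T = S A` and `T = P A² = A² P`, so `T` commutes with `A²` and hence with `|A|`.
The self-adjoint `A` need not be invertible, but with `E` the projection onto `ker A`, the maps
`|A| + E` and `A + E` are injective self-adjoint operators with `‖(|A| + E) x‖ = ‖(A + E) x‖`,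
so `(|A| + E) x ↦ (A + E) x` extends from a dense subspace to a unitary `W`. Both `T` and `S`
vanish on `ker A`, and intertwining through `|A| + E` gives `W T = S W`.
-/

open ContinuousLinearMap

variable {H : Type*} [NormedAddCommGroup H] [InnerProductSpace ℂ H] [CompleteSpace H]

/-- The orthogonal projection onto a closed subspace, as an operator on `H`. -/
noncomputable def projOf (F : Submodule ℂ H) [CompleteSpace F] : H →L[ℂ] H :=
  F.subtypeL ∘L F.orthogonalProjection

section Ring

variable {R : Type*} [Ring R] {p q : R}

lemma IsIdempotentElem.mul_add_sub_one_mul_self (hp : IsIdempotentElem p)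
    (hq : IsIdempotentElem q) : p * ((p + q - 1) * (p + q - 1)) = p * q * p := by
  have hp' : ∀ x, p * (p * x) = p * x := fun x => by rw [← mul_assoc, hp.eq]
  simp only [mul_add, add_mul, mul_sub, sub_mul, mul_one, one_mul, mul_assoc, hp', hp.eq, hq.eq]
  abel

lemma IsIdempotentElem.add_sub_one_mul_self_mul (hp : IsIdempotentElem p)
    (hq : IsIdempotentElem q) : (p + q - 1) * (p + q - 1) * p = p * q * p := by
  simp only [mul_add, add_mul, mul_sub, sub_mul, mul_one, one_mul, mul_assoc, hp.eq, hq.eq]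
  abel

lemma IsIdempotentElem.add_sub_one_mul_mul_mul (hp : IsIdempotentElem p)
    (hq : IsIdempotentElem q) : (p + q - 1) * (p * q * p) = q * p * q * (p + q - 1) := by
  have hp' : ∀ x, p * (p * x) = p * x := fun x => by rw [← mul_assoc, hp.eq]
  simp only [mul_add, add_mul, mul_sub, sub_mul, mul_one, one_mul, mul_assoc, hp', hq.eq]
  abel

lemma IsSelfAdjoint.mul_eq_zero_symm [StarRing R] {a b : R} (ha : IsSelfAdjoint a)
    (hb : IsSelfAdjoint b) (h : a * b = 0) : b * a = 0 := by
  simpa [star_mul, ha.star_eq, hb.star_eq] using congrArg star h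

end Ring

lemma ContinuousLinearMap.mul_right_cancel_of_denseRange {R M : Type*} [Semiring R]
    [TopologicalSpace M] [T2Space M] [AddCommMonoid M] [Module R M] {X Y B : M →L[R] M}
    (hB : DenseRange B) (h : X * B = Y * B) : X = Y :=
  DFunLike.coe_injective <| hB.equalizer X.continuous Y.continuous congr(⇑$h)

section RCLike

variable {𝕜 E : Type*} [RCLike 𝕜] [NormedAddCommGroup E] [InnerProductSpace 𝕜 E] [CompleteSpace E]

lemma ContinuousLinearMap.norm_apply_eq_of_star_mul_self_eq {B C : E →L[𝕜] E}
    (h : star B * B = star C * C) (x : E) : ‖B x‖ = ‖C x‖ := by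
  rw [← sq_eq_sq₀ (norm_nonneg _) (norm_nonneg _), B.apply_norm_sq_eq_inner_adjoint_left,
    C.apply_norm_sq_eq_inner_adjoint_left]
  simp only [← star_eq_adjoint, ← mul_def, h]

lemma IsStarNormal.denseRange_of_injective {T : E →L[𝕜] E} (hT : IsStarNormal T)
    (hinj : Function.Injective T) : DenseRange T := by
  have horth : T.rangeᗮ = ⊥ := by rw [hT.orthogonal_range]; exact LinearMap.ker_eq_bot.mpr hinj
  have hdense := Submodule.dense_iff_topologicalClosure_eq_top.mpr
    (Submodule.topologicalClosure_eq_top_iff.mpr horth)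
  rwa [LinearMap.coe_range, coe_coe] at hdense

lemma exists_mem_unitary_mul_eq_of_norm_eq {B C : E →L[𝕜] E} (hB : DenseRange B)
    (hC : DenseRange C) (h : ∀ x, ‖C x‖ = ‖B x‖) : ∃ W ∈ unitary (E →L[𝕜] E), W * B = C := by
  let e := (LinearEquiv.refl 𝕜 E).extendOfIsometry (B : E →ₗ[𝕜] E) (C : E →ₗ[𝕜] E) hB hC h
  refine ⟨Unitary.linearIsometryEquiv.symm e, (Unitary.linearIsometryEquiv.symm e).2, ?_⟩
  ext x
  exact LinearEquiv.extendOfIsometry_eq _ _ _ hB hC h x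

lemma mul_starProjection_ker (A : E →L[𝕜] E) : A * A.ker.starProjection = 0 := by
  ext x
  exact (A.ker.starProjection_apply_mem x : _)

lemma star_add_starProjection_mul_self {K : Submodule 𝕜 E} [K.HasOrthogonalProjection]
    {X : E →L[𝕜] E} (hX : IsSelfAdjoint X) (hXE : X * K.starProjection = 0) :
    star (X + K.starProjection) * (X + K.starProjection) = X * X + K.starProjection := by
  have hE := isStarProjection_starProjection (U := K)
  rw [star_add, hX.star_eq, hE.isSelfAdjoint.star_eq, add_mul, mul_add, mul_add, hXE,
    hX.mul_eq_zero_symm hE.isSelfAdjoint hXE, hE.isIdempotentElem.eq, add_zero, zero_add]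

lemma IsSelfAdjoint.injective_add_starProjection_ker {A : E →L[𝕜] E} (hA : IsSelfAdjoint A) :
    Function.Injective (A + A.ker.starProjection) := by
  have hE := isStarProjection_starProjection (U := A.ker)
  refine (injective_iff_map_eq_zero (A + A.ker.starProjection)).mpr fun x hx => ?_
  have hEx : A.ker.starProjection x = 0 := by
    have := congrArg A.ker.starProjection hx
    rwa [add_apply, map_add, ← mul_apply_eq_comp,
      hA.mul_eq_zero_symm hE.isSelfAdjoint (mul_starProjection_ker A), zero_apply, zero_add,
      ← mul_apply_eq_comp, hE.isIdempotentElem.eq, map_zero] at this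
  have hx_ker : x ∈ A.ker := by simpa [hEx] using hx
  rw [← Submodule.starProjection_eq_self_iff.mpr hx_ker, hEx]

end RCLike

lemma norm_cfcAbs_apply (A : H →L[ℂ] H) (x : H) : ‖CFC.abs A x‖ = ‖A x‖ :=
  norm_apply_eq_of_star_mul_self_eq
    (by rw [(CFC.abs_nonneg A).isSelfAdjoint.star_eq, CFC.abs_mul_abs]) x

lemma cfcAbs_mul_starProjection_ker (A : H →L[ℂ] H) : CFC.abs A * A.ker.starProjection = 0 := by
  ext x
  rw [mul_apply_eq_comp, zero_apply, ← norm_eq_zero, norm_cfcAbs_apply, norm_eq_zero]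
  exact A.ker.starProjection_apply_mem x

namespace IsSelfAdjoint

variable {A : H →L[ℂ] H}

lemma norm_cfcAbs_add_starProjection_ker_apply (hA : IsSelfAdjoint A) (x : H) :
    ‖(CFC.abs A + A.ker.starProjection) x‖ = ‖(A + A.ker.starProjection) x‖ := by
  refine norm_apply_eq_of_star_mul_self_eq ?_ x
  rw [star_add_starProjection_mul_self (CFC.abs_nonneg A).isSelfAdjoint
    (cfcAbs_mul_starProjection_ker A), star_add_starProjection_mul_self hA
    (mul_starProjection_ker A), CFC.abs_mul_abs, hA.star_eq]

lemma injective_cfcAbs_add_starProjection_ker (hA : IsSelfAdjoint A) :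
    Function.Injective (CFC.abs A + A.ker.starProjection) := by
  refine (injective_iff_map_eq_zero _).mpr fun x hx => ?_
  refine (injective_iff_map_eq_zero _).mp hA.injective_add_starProjection_ker x ?_
  rw [← norm_eq_zero, ← hA.norm_cfcAbs_add_starProjection_ker_apply, hx, norm_zero]

lemma denseRange_cfcAbs_add_starProjection_ker (hA : IsSelfAdjoint A) :
    DenseRange (CFC.abs A + A.ker.starProjection) :=
  ((CFC.abs_nonneg A).isSelfAdjoint.add (isSelfAdjoint_starProjection A.ker)).isStarNormal
    |>.denseRange_of_injective hA.injective_cfcAbs_add_starProjection_ker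

lemma exists_mem_unitary_mul_cfcAbs_add_starProjection_ker (hA : IsSelfAdjoint A) :
    ∃ W ∈ unitary (H →L[ℂ] H),
      W * (CFC.abs A + A.ker.starProjection) = A + A.ker.starProjection :=
  exists_mem_unitary_mul_eq_of_norm_eq hA.denseRange_cfcAbs_add_starProjection_ker
    ((hA.add (isSelfAdjoint_starProjection A.ker)).isStarNormal.denseRange_of_injective
      hA.injective_add_starProjection_ker)
    fun x => (hA.norm_cfcAbs_add_starProjection_ker_apply x).symm

end IsSelfAdjoint

theorem IsStarProjection.exists_mem_unitary_mul_mul_eq_star_mul_mul {P Q : H →L[ℂ] H}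
    (hP : IsStarProjection P) (hQ : IsStarProjection Q) :
    ∃ W ∈ unitary (H →L[ℂ] H), P * Q * P = star W * (Q * P * Q) * W := by
  set A := P + Q - 1
  have hA : IsSelfAdjoint A := (hP.isSelfAdjoint.add hQ.isSelfAdjoint).sub (.one _)
  have hPA : P * (A * A) = P * Q * P :=
    hP.isIdempotentElem.mul_add_sub_one_mul_self hQ.isIdempotentElem
  have hAP : A * A * P = P * Q * P :=
    hP.isIdempotentElem.add_sub_one_mul_self_mul hQ.isIdempotentElem
  have hQA : Q * (A * A) = Q * P * Q := by
    rw [← hQ.isIdempotentElem.mul_add_sub_one_mul_self hP.isIdempotentElem, add_comm Q P]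
  have hT : IsSelfAdjoint (P * Q * P) := hQ.isSelfAdjoint.conjugate_self hP.isSelfAdjoint
  obtain ⟨W, hW, hWB⟩ := hA.exists_mem_unitary_mul_cfcAbs_add_starProjection_ker
  set E := A.ker.starProjection
  have hE : IsSelfAdjoint E := isSelfAdjoint_starProjection A.ker
  have hAE : A * A * E = 0 := by rw [mul_assoc, mul_starProjection_ker, mul_zero]
  have hTE : P * Q * P * E = 0 := by rw [← hPA, mul_assoc, hAE, mul_zero]
  have hSE : Q * P * Q * E = 0 := by rw [← hQA, mul_assoc, hAE, mul_zero]
  have habs : Commute (CFC.abs A) (P * Q * P) := by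
    have hA_T : Commute (star A * A) (P * Q * P) := by
      rw [hA.star_eq, Commute, SemiconjBy, ← hPA, ← mul_assoc, hAP, hPA]
    exact hA_T.cfcₙ_nnreal NNReal.sqrt
  have hTB : P * Q * P * (CFC.abs A + E) = (CFC.abs A + E) * (P * Q * P) := by
    rw [mul_add, add_mul, hTE, hT.mul_eq_zero_symm hE hTE, habs.eq]
  have hWT : W * (P * Q * P) = Q * P * Q * W := by
    refine mul_right_cancel_of_denseRange hA.denseRange_cfcAbs_add_starProjection_ker ?_
    calc W * (P * Q * P) * (CFC.abs A + E)
        = (A + E) * (P * Q * P) := by rw [mul_assoc, hTB, ← mul_assoc, hWB]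
      _ = Q * P * Q * (A + E) := by
          rw [add_mul, mul_add, hT.mul_eq_zero_symm hE hTE, hSE,
            hP.isIdempotentElem.add_sub_one_mul_mul_mul hQ.isIdempotentElem]
      _ = Q * P * Q * W * (CFC.abs A + E) := by rw [mul_assoc _ W, hWB]
  refine ⟨W, hW, ?_⟩
  rw [mul_assoc (star W), ← hWT, ← mul_assoc, Unitary.star_mul_self_of_mem hW, one_mul]

theorem exists_unitary_conj (F G : Submodule ℂ H) [CompleteSpace F] [CompleteSpace G] :
    ∃ W : H →L[ℂ] H, W ∈ unitary (H →L[ℂ] H) ∧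
      projOf F * projOf G * projOf F = star W * (projOf G * projOf F * projOf G) * W :=
  isStarProjection_starProjection.exists_mem_unitary_mul_mul_eq_star_mul_mul
    isStarProjection_starProjection
end

section
/- For orthogonal projectors P_F, P_G on a Hilbert space, the multiplicity of the eigenvalue 1 of P_G − P_F equals dim(F⊥ ∩ G), the multiplicity of −1 equals dim(F ∩ G⊥), and the multiplicity of 0 equals dim(F ∩ G) + dim(F⊥ ∩ G⊥). -/
open ContinuousLinearMap

variable {H : Type*} [NormedAddCommGroup H] [InnerProductSpace ℂ H] [CompleteSpace H]

/-! Since `re⟪P_K x, x⟫ = ‖P_K x‖²`, an `x` with `P_L x - P_K x = x` satisfies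
`‖x‖² = ‖P_L x‖² - ‖P_K x‖² ≤ ‖x‖² - ‖P_K x‖²`, which forces `P_K x = 0` and then `P_L x = x`;
the eigenvalue `-1` is the same case with `K` and `L` swapped. If `P_K x = P_L x =: y`, then
`y ∈ K ⊓ L` and `x - y ∈ Kᗮ ⊓ Lᗮ`; these two subspaces are orthogonal, so their ranks add. -/

universe u

theorem Submodule.rank_sup_of_disjoint {R : Type*} {M : Type u} [Ring R] [HasRankNullity.{u} R]
    [AddCommGroup M] [Module R M] {s t : Submodule R M} (h : Disjoint s t) :
    Module.rank R (s ⊔ t : Submodule R M) = Module.rank R s + Module.rank R t := by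
  have : Nontrivial R := nontrivial_of_hasRankNullity R
  rw [← Submodule.rank_sup_add_rank_inf_eq, h.eq_bot, rank_bot, add_zero]

theorem Module.End.eigenspace_neg {R M : Type*} [CommRing R] [AddCommGroup M] [Module R M]
    (f : Module.End R M) (μ : R) : eigenspace (-f) (-μ) = eigenspace f μ := by
  ext x
  simp only [mem_eigenspace_iff, LinearMap.neg_apply, neg_smul, neg_inj]

namespace Submodule

open Module.End RCLike

variable {𝕜 E : Type*} [RCLike 𝕜] [NormedAddCommGroup E] [InnerProductSpace 𝕜 E]

theorem disjoint_inf_inf_orthogonal (K L : Submodule 𝕜 E) : Disjoint (K ⊓ L) (Kᗮ ⊓ Lᗮ) :=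
  K.orthogonal_disjoint.mono inf_le_left inf_le_left

variable (K L : Submodule 𝕜 E) [K.HasOrthogonalProjection] [L.HasOrthogonalProjection]

theorem starProjection_apply_eq_zero_of_sub_eq_self {x : E}
    (h : L.starProjection x - K.starProjection x = x) : K.starProjection x = 0 := by
  have hx : ‖x‖ ^ 2 = ‖L.starProjection x‖ ^ 2 - ‖K.starProjection x‖ ^ 2 :=
    calc ‖x‖ ^ 2 = re (inner 𝕜 (L.starProjection x - K.starProjection x) x) := by
          rw [h, inner_self_eq_norm_sq]
      _ = _ := by
          rw [inner_sub_left, map_sub, re_inner_starProjection_eq_normSq,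
            re_inner_starProjection_eq_normSq]
          rfl
  have hL : ‖L.starProjection x‖ ^ 2 ≤ ‖x‖ ^ 2 := by
    gcongr
    exact L.norm_starProjection_apply_le x
  rw [← norm_eq_zero, ← sq_eq_zero_iff]
  nlinarith [sq_nonneg ‖K.starProjection x‖]

theorem eigenspace_starProjection_sub_starProjection_one :
    eigenspace ((L.starProjection - K.starProjection : E →L[𝕜] E) : E →ₗ[𝕜] E) 1 = Kᗮ ⊓ L := by
  ext x
  simp only [mem_eigenspace_iff, coe_coe, sub_apply, one_smul, mem_inf]
  constructor
  · intro h
    have hK := starProjection_apply_eq_zero_of_sub_eq_self K L h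
    rw [hK, sub_zero] at h
    exact ⟨(starProjection_apply_eq_zero_iff K).mp hK, starProjection_eq_self_iff.mp h⟩
  · rintro ⟨hK, hL⟩
    rw [(starProjection_apply_eq_zero_iff K).mpr hK, starProjection_eq_self_iff.mpr hL, sub_zero]

theorem eigenspace_starProjection_sub_starProjection_neg_one :
    eigenspace ((L.starProjection - K.starProjection : E →L[𝕜] E) : E →ₗ[𝕜] E) (-1) = K ⊓ Lᗮ := by
  rw [← eigenspace_neg, neg_neg, ← toLinearMap_neg, neg_sub,
    eigenspace_starProjection_sub_starProjection_one, inf_comm]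

theorem eigenspace_starProjection_sub_starProjection_zero :
    eigenspace ((L.starProjection - K.starProjection : E →L[𝕜] E) : E →ₗ[𝕜] E) 0 =
      (K ⊓ L) ⊔ (Kᗮ ⊓ Lᗮ) := by
  apply le_antisymm
  · intro x hx
    rw [mem_eigenspace_iff, zero_smul, coe_coe, sub_apply, sub_eq_zero] at hx
    have hy : K.starProjection x ∈ K ⊓ L :=
      ⟨K.starProjection_apply_mem x, hx ▸ L.starProjection_apply_mem x⟩
    have hz : x - K.starProjection x ∈ Kᗮ ⊓ Lᗮ :=
      ⟨K.sub_starProjection_mem_orthogonal x, hx ▸ L.sub_starProjection_mem_orthogonal x⟩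
    exact mem_sup.mpr ⟨_, hy, _, hz, add_sub_cancel _ x⟩
  · refine sup_le (fun x hx => ?_) (fun x hx => ?_) <;>
      rw [mem_eigenspace_iff, zero_smul, coe_coe, sub_apply, sub_eq_zero]
    · rw [starProjection_eq_self_iff.mpr hx.1, starProjection_eq_self_iff.mpr hx.2]
    · rw [(starProjection_apply_eq_zero_iff K).mpr hx.1,
        (starProjection_apply_eq_zero_iff L).mpr hx.2]

end Submodule

theorem eigenspace_dims_of_diff (F G : Submodule ℂ H) [CompleteSpace F] [CompleteSpace G] :
    Module.rank ℂ
        (Module.End.eigenspace ((projOf G - projOf F : H →L[ℂ] H) : H →ₗ[ℂ] H) 1) =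
      Module.rank ℂ (Fᗮ ⊓ G : Submodule ℂ H) ∧
    Module.rank ℂ
        (Module.End.eigenspace ((projOf G - projOf F : H →L[ℂ] H) : H →ₗ[ℂ] H) (-1)) =
      Module.rank ℂ (F ⊓ Gᗮ : Submodule ℂ H) ∧
    Module.rank ℂ
        (Module.End.eigenspace ((projOf G - projOf F : H →L[ℂ] H) : H →ₗ[ℂ] H) 0) =
      Module.rank ℂ (F ⊓ G : Submodule ℂ H) + Module.rank ℂ (Fᗮ ⊓ Gᗮ : Submodule ℂ H) := by
  rw [show projOf G - projOf F = G.starProjection - F.starProjection from rfl,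
    Submodule.eigenspace_starProjection_sub_starProjection_one,
    Submodule.eigenspace_starProjection_sub_starProjection_neg_one,
    Submodule.eigenspace_starProjection_sub_starProjection_zero,
    Submodule.rank_sup_of_disjoint (Submodule.disjoint_inf_inf_orthogonal F G)]
  exact ⟨rfl, rfl, rfl⟩
end

section
/- Let U ⊆ F be a closed subspace invariant under P_F P_G, and let V = closure(P_G U) ⊕ V₀ where V₀ is a closed subspace of G ∩ F⊥. Then P_F V ⊆ U and P_G U ⊆ V. -/
open ContinuousLinearMap

variable {H : Type*} [NormedAddCommGroup H] [InnerProductSpace ℂ H] [CompleteSpace H]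

theorem principal_invariant_subspaces_converse_general (F G U V₀ : Submodule ℂ H)
    [CompleteSpace F] [CompleteSpace G]
    (hU : IsClosed (U : Set H))
    (hinv : ∀ u ∈ U, projOf F (projOf G u) ∈ U)
    (hV₀ : V₀ ≤ G ⊓ Fᗮ) :
    (∀ v ∈ (U.map ((projOf G : H →L[ℂ] H) : H →ₗ[ℂ] H)).topologicalClosure ⊔ V₀,
        projOf F v ∈ U) ∧
      (∀ u ∈ U,
        projOf G u ∈
          (U.map ((projOf G : H →L[ℂ] H) : H →ₗ[ℂ] H)).topologicalClosure ⊔ V₀) := by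
  set PGU := U.map ((projOf G : H →L[ℂ] H) : H →ₗ[ℂ] H)
  have hPGU : PGU ≤ U.comap (projOf F : H →ₗ[ℂ] H) := by
    rintro _ ⟨u, hu, rfl⟩
    exact hinv u hu
  have hclosure : PGU.topologicalClosure ≤ U.comap (projOf F : H →ₗ[ℂ] H) :=
    PGU.topologicalClosure_minimal hPGU (hU.preimage (projOf F).continuous)
  refine ⟨fun v hv => ?_, fun u hu =>
    Submodule.mem_sup_left (PGU.le_topologicalClosure ⟨u, hu, rfl⟩)⟩
  obtain ⟨x, hx, y, hy, rfl⟩ := Submodule.mem_sup.mp hv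
  have hFy : projOf F y = 0 := by
    simp [projOf, Submodule.orthogonalProjectionOnto_eq_zero_iff.mpr (hV₀ hy).2]
  rw [map_add, hFy, add_zero]
  exact hclosure hx

theorem principal_invariant_subspaces_converse (F G U V₀ : Submodule ℂ H)
    [CompleteSpace F] [CompleteSpace G]
    (hUF : U ≤ F) (hU : IsClosed (U : Set H))
    (hinv : ∀ u ∈ U, projOf F (projOf G u) ∈ U)
    (hV₀ : V₀ ≤ G ⊓ Fᗮ) (hV₀c : IsClosed (V₀ : Set H)) :
    (∀ v ∈ (U.map ((projOf G : H →L[ℂ] H) : H →ₗ[ℂ] H)).topologicalClosure ⊔ V₀,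
        projOf F v ∈ U) ∧
      (∀ u ∈ U,
        projOf G u ∈
          (U.map ((projOf G : H →L[ℂ] H) : H →ₗ[ℂ] H)).topologicalClosure ⊔ V₀) :=
  principal_invariant_subspaces_converse_general F G U V₀ hU hinv hV₀
end

section
/- Let A be a bounded selfadjoint operator on a Hilbert space H and f, g nonzero vectors. Then |λ(f) − λ(g)| ≤ (sup Σ(A) − inf Σ(A)) · sin θ(f,g), where λ(h) = (h, Ah)/(h,h) is the Rayleigh quotient and cos θ(f,g) = |(f,g)|/(‖f‖‖g‖). -/
/-! Shift `A` by the midpoint `c` of its spectrum, so that `‖A - c‖ ≤ (sup Σ(A) - inf Σ(A)) / 2`.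
Both sides of the inequality are invariant under rescaling `f` and `g`, so we may take them to be
unit vectors with `(f, g) = cos θ ≥ 0`. Then `λ(f) - λ(g) = Re (B (f + g), f - g)` for the
selfadjoint `B = A - c`, which is at most `‖B‖ ‖f + g‖ ‖f - g‖ = 2 ‖B‖ sin θ`. -/

open ContinuousLinearMap

theorem IsSelfAdjoint.norm_sub_algebraMap_midpoint_le {𝒜 : Type*} [CStarAlgebra 𝒜] {a : 𝒜}
    (ha : IsSelfAdjoint a) {m M : ℝ} (hmM : m ≤ M) (hσ : spectrum ℝ a ⊆ Set.Icc m M) :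
    ‖a - algebraMap ℝ 𝒜 ((m + M) / 2)‖ ≤ (M - m) / 2 := by
  have hcfc : a - algebraMap ℝ 𝒜 ((m + M) / 2) = cfc (fun x : ℝ ↦ x - (m + M) / 2) a := by
    rw [cfc_sub .., cfc_id' .., cfc_const ..]
  rw [hcfc]
  refine norm_cfc_le (by linarith) fun x hx ↦ ?_
  obtain ⟨hmx, hxM⟩ := hσ hx
  rw [Real.norm_eq_abs, abs_le]
  constructor <;> linarith

section InnerProduct

open RCLike

variable {𝕜 E : Type*} [RCLike 𝕜] [NormedAddCommGroup E] [InnerProductSpace 𝕜 E]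

local notation "⟪" x ", " y "⟫" => inner 𝕜 x y

theorem LinearMap.IsSymmetric.re_inner_sub_re_inner {T : E →ₗ[𝕜] E} (hT : T.IsSymmetric)
    (x y : E) : re ⟪T x, x⟫ - re ⟪T y, y⟫ = re ⟪T (x + y), x - y⟫ := by
  have hcross : re ⟪T y, x⟫ = re ⟪T x, y⟫ := by rw [hT, inner_re_symm]
  simp only [map_add, inner_add_left, inner_sub_right, map_sub]
  linarith

theorem norm_add_mul_norm_sub_of_norm_eq_one {x y : E} (hx : ‖x‖ = 1) (hy : ‖y‖ = 1) :
    ‖x + y‖ * ‖x - y‖ = 2 * √(1 - re ⟪x, y⟫ ^ 2) := by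
  have hsq : (‖x + y‖ * ‖x - y‖) ^ 2 = 2 ^ 2 * (1 - re ⟪x, y⟫ ^ 2) := by
    rw [mul_pow, norm_add_sq (𝕜 := 𝕜), norm_sub_sq (𝕜 := 𝕜), hx, hy]
    ring
  rw [← Real.sqrt_sq (by positivity : 0 ≤ ‖x + y‖ * ‖x - y‖), hsq, Real.sqrt_mul (by positivity),
    Real.sqrt_sq zero_le_two]

theorem RCLike.exists_norm_eq_one_mul_eq_norm (z : 𝕜) : ∃ u : 𝕜, ‖u‖ = 1 ∧ u * z = ‖z‖ := by
  rcases eq_or_ne z 0 with rfl | hz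
  · exact ⟨1, by simp, by simp⟩
  · exact ⟨‖z‖ / z, by simp [hz], by field_simp⟩

theorem exists_smul_norm_eq_one_inner_eq {f g : E} (hf : f ≠ 0) (hg : g ≠ 0) :
    ∃ a b : 𝕜, a ≠ 0 ∧ b ≠ 0 ∧ ‖a • f‖ = 1 ∧ ‖b • g‖ = 1 ∧
      ⟪a • f, b • g⟫ = ((‖⟪f, g⟫‖ / (‖f‖ * ‖g‖) : ℝ) : 𝕜) := by
  obtain ⟨u, hu, huz⟩ := RCLike.exists_norm_eq_one_mul_eq_norm ⟪f, g⟫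
  have hf' : ‖f‖ ≠ 0 := norm_ne_zero_iff.mpr hf
  have hg' : ‖g‖ ≠ 0 := norm_ne_zero_iff.mpr hg
  have hu' : u ≠ 0 := norm_ne_zero_iff.mp (by simp [hu])
  refine ⟨(‖f‖⁻¹ : ℝ), u * (‖g‖⁻¹ : ℝ), by simpa using hf', mul_ne_zero hu' (by simpa using hg'),
    ?_, ?_, ?_⟩
  · rw [norm_smul, norm_ofReal, abs_inv, abs_norm, inv_mul_cancel₀ hf']
  · rw [norm_smul, norm_mul, hu, norm_ofReal, abs_inv, abs_norm, one_mul, inv_mul_cancel₀ hg']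
  · rw [inner_smul_left, inner_smul_right, conj_ofReal]
    push_cast
    linear_combination ((‖f‖ : 𝕜)⁻¹ * (‖g‖ : 𝕜)⁻¹) * huz

theorem IsSelfAdjoint.abs_rayleighQuotient_sub_le {E : Type*} [NormedAddCommGroup E]
    [InnerProductSpace ℂ E] [CompleteSpace E] {A : E →L[ℂ] E} (hA : IsSelfAdjoint A)
    {x y : E} (hx : ‖x‖ = 1) (hy : ‖y‖ = 1) :
    |A.rayleighQuotient x - A.rayleighQuotient y| ≤
      (sSup (spectrum ℝ A) - sInf (spectrum ℝ A)) * √(1 - (inner ℂ x y).re ^ 2) := by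
  set m := sInf (spectrum ℝ A)
  set M := sSup (spectrum ℝ A)
  set B := A - algebraMap ℝ (E →L[ℂ] E) ((m + M) / 2)
  have hbdd := spectrum.isBounded (𝕜 := ℝ) A
  have hB : ‖B‖ ≤ (M - m) / 2 :=
    hA.norm_sub_algebraMap_midpoint_le (Real.sInf_le_sSup _ hbdd.bddBelow hbdd.bddAbove)
      (subset_Icc_csInf_csSup hbdd.bddBelow hbdd.bddAbove)
  have hBsymm : (B : E →ₗ[ℂ] E).IsSymmetric :=
    (hA.sub (.algebraMap _ (.all _))).isSymmetric
  have hshift : ∀ z : E, ‖z‖ = 1 → A.rayleighQuotient z = re (inner ℂ (B z) z) + (m + M) / 2 := by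
    intro z hz
    simp [B, rayleighQuotient, reApplyInnerSelf_apply, hz, Algebra.algebraMap_eq_smul_one]
  have hdiff := hBsymm.re_inner_sub_re_inner x y
  simp only [coe_coe] at hdiff
  rw [hshift x hx, hshift y hy, add_sub_add_right_eq_sub, hdiff]
  calc |re (inner ℂ (B (x + y)) (x - y))|
      ≤ ‖B‖ * (‖x + y‖ * ‖x - y‖) := by
        grw [abs_re_le_norm, norm_inner_le_norm (𝕜 := ℂ), le_opNorm, mul_assoc]
    _ ≤ (M - m) / 2 * (2 * √(1 - (inner ℂ x y).re ^ 2)) := by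
        rw [norm_add_mul_norm_sub_of_norm_eq_one (𝕜 := ℂ) hx hy]
        exact mul_le_mul_of_nonneg_right hB (by positivity)
    _ = (M - m) * √(1 - (inner ℂ x y).re ^ 2) := by ring

end InnerProduct

theorem rayleigh_quotient_perturbation {H : Type*} [NormedAddCommGroup H]
    [InnerProductSpace ℂ H] [CompleteSpace H]
    (A : H →L[ℂ] H) (hA : IsSelfAdjoint A) (f g : H) (hf : f ≠ 0) (hg : g ≠ 0) :
    |(inner ℂ f (A f) : ℂ).re / ‖f‖ ^ 2 - (inner ℂ g (A g) : ℂ).re / ‖g‖ ^ 2| ≤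
      (sSup (spectrum ℝ A) - sInf (spectrum ℝ A)) *
        Real.sqrt (1 - ‖(inner ℂ f g : ℂ)‖ ^ 2 / (‖f‖ ^ 2 * ‖g‖ ^ 2)) := by
  obtain ⟨a, b, ha, hb, hfa, hgb, hab⟩ := exists_smul_norm_eq_one_inner_eq (𝕜 := ℂ) hf hg
  have key := hA.abs_rayleighQuotient_sub_le hfa hgb
  rw [rayleigh_smul A f ha, rayleigh_smul A g hb, hab, ← RCLike.re_to_complex, RCLike.ofReal_re,
    div_pow, mul_pow] at key
  simpa only [rayleighQuotient, reApplyInnerSelf_apply, inner_re_symm (A _), RCLike.re_to_complex]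
    using key
end

section
/- Let h, f, g be unit vectors in a Hilbert space. Then |cos² θ(h,f) − cos² θ(h,g)| ≤ sin θ(f,g), where cos θ(x,y) = |(x,y)| and sin θ(f,g) = sqrt(1 − |(f,g)|²). -/
/-!
Write `h` and `f` as their components along the unit vector `g` plus components orthogonal to
`g`. With `cos φ = |⟪h, g⟫|` and `cos ψ = |⟪f, g⟫|`, the cross term is bounded by Cauchy–Schwarz in
`gᗮ`, giving `|⟪h, f⟫| ≤ cos φ cos ψ + sin φ sin ψ = cos (φ - ψ)`, and
`cos² (φ - ψ) - cos² φ = sin ψ · sin (2φ - ψ) ≤ sin ψ`. Exchanging `f` and `g` gives the other sign.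
-/

open scoped InnerProductSpace

theorem sq_sub_sq_le_of_le_mul_add_mul {α β γ c s : ℝ} (hs : 0 ≤ s) (hcs : c ^ 2 + s ^ 2 = 1)
    (hβγ : β ^ 2 + γ ^ 2 ≤ 1) (hα : 0 ≤ α) (hαle : α ≤ β * c + γ * s) : α ^ 2 - β ^ 2 ≤ s := by
  set X := 2 * c * β * γ + s * (γ ^ 2 - β ^ 2)
  have hX : X ≤ 1 := by
    have lagrange : X ^ 2 + (c * (γ ^ 2 - β ^ 2) - 2 * s * β * γ) ^ 2 = (β ^ 2 + γ ^ 2) ^ 2 := by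
      linear_combination (γ ^ 2 + β ^ 2) ^ 2 * hcs
    nlinarith [sq_nonneg (c * (γ ^ 2 - β ^ 2) - 2 * s * β * γ), sq_nonneg (β ^ 2 + γ ^ 2)]
  calc α ^ 2 - β ^ 2 ≤ (β * c + γ * s) ^ 2 - β ^ 2 := by gcongr
    _ = s * X := by linear_combination β ^ 2 * hcs
    _ ≤ s := mul_le_of_le_one_right hs hX

section

variable {𝕜 E : Type*} [RCLike 𝕜] [NormedAddCommGroup E] [InnerProductSpace 𝕜 E]

theorem inner_eq_add_inner_sub_inner_smul {g : E} (hg : ‖g‖ = 1) (x y : E) :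
    ⟪x, y⟫_𝕜 = ⟪x, g⟫_𝕜 * ⟪g, y⟫_𝕜 + ⟪x - ⟪g, x⟫_𝕜 • g, y - ⟪g, y⟫_𝕜 • g⟫_𝕜 := by
  have hgg : ⟪g, g⟫_𝕜 = 1 := by simp [inner_self_eq_norm_sq_to_K, hg]
  simp only [inner_sub_left, inner_sub_right, inner_smul_left, inner_smul_right, hgg,
    inner_conj_symm]
  ring

theorem norm_sub_inner_smul_sq {g : E} (hg : ‖g‖ = 1) (x : E) :
    ‖x - ⟪g, x⟫_𝕜 • g‖ ^ 2 = ‖x‖ ^ 2 - ‖⟪g, x⟫_𝕜‖ ^ 2 := by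
  have pythagoras := (𝕜 ∙ g).norm_sq_eq_add_norm_sq_starProjection x
  rw [Submodule.starProjection_orthogonal', sub_apply,
    Submodule.starProjection_unit_singleton 𝕜 hg, norm_smul, hg, mul_one] at pythagoras
  simp only [one_apply_eq_self] at pythagoras
  linarith

theorem norm_inner_le_of_norm_eq_one {g : E} (hg : ‖g‖ = 1) (x y : E) :
    ‖⟪x, y⟫_𝕜‖ ≤ ‖⟪g, x⟫_𝕜‖ * ‖⟪g, y⟫_𝕜‖ + ‖x - ⟪g, x⟫_𝕜 • g‖ * ‖y - ⟪g, y⟫_𝕜 • g‖ := by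
  rw [inner_eq_add_inner_sub_inner_smul hg x y]
  refine (norm_add_le _ _).trans (add_le_add ?_ (norm_inner_le_norm _ _))
  rw [norm_mul, norm_inner_symm x g]

theorem norm_inner_sq_sub_norm_inner_sq_le {h f g : E} (hh : ‖h‖ ≤ 1) (hf : ‖f‖ = 1)
    (hg : ‖g‖ = 1) :
    ‖⟪h, f⟫_𝕜‖ ^ 2 - ‖⟪h, g⟫_𝕜‖ ^ 2 ≤ √(1 - ‖⟪f, g⟫_𝕜‖ ^ 2) := by
  have hs : √(1 - ‖⟪f, g⟫_𝕜‖ ^ 2) = ‖f - ⟪g, f⟫_𝕜 • g‖ := by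
    rw [norm_inner_symm, ← one_pow 2, ← hf, ← norm_sub_inner_smul_sq hg,
      Real.sqrt_sq (norm_nonneg _)]
  rw [hs, norm_inner_symm h g]
  refine sq_sub_sq_le_of_le_mul_add_mul (norm_nonneg _) ?_ ?_ (norm_nonneg _)
    (norm_inner_le_of_norm_eq_one hg h f)
  · rw [norm_sub_inner_smul_sq hg, hf]
    ring
  · rw [norm_sub_inner_smul_sq hg]
    nlinarith [norm_nonneg h]

end

theorem cos_sq_angle_perturbation {H : Type*} [NormedAddCommGroup H]
    [InnerProductSpace ℂ H] (h f g : H)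
    (hh : ‖h‖ = 1) (hf : ‖f‖ = 1) (hg : ‖g‖ = 1) :
    |‖(inner ℂ h f : ℂ)‖ ^ 2 - ‖(inner ℂ h g : ℂ)‖ ^ 2| ≤
      Real.sqrt (1 - ‖(inner ℂ f g : ℂ)‖ ^ 2) := by
  rw [abs_sub_le_iff]
  constructor
  · exact norm_inner_sq_sub_norm_inner_sq_le hh.le hf hg
  · rw [norm_inner_symm f g]
    exact norm_inner_sq_sub_norm_inner_sq_le hh.le hg hf
end
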